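/- For every r > 0 there exists a constant C_r < ∞, independent of j ∈ ℤ and k ∈ E, such that the tensor-product central bell function G_{R_{j,k}}(x) := ∏_{i=1}^d g_{I^i_{j,k_i}}(x_i) of the Lizorkin rectangle R_{j,k} = I^1_{j,k_1} × ⋯ × I^d_{j,k_d} satisfies |G_{R_{j,k}}(x)| ≤ C_r ⟨x⟩^{-r} for all x ∈ ℝ^d, where ⟨·⟩ is the anisotropic bracket. -/

import Mathlib

/-!
After rescaling every interval and cutoff radius by `2^{j aᵢ}`, the bell function of `I^i_{j,k}`
no longer depends on `j`, so for each coordinate only the four shapes `k = ±1, ±2` occur. Each is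
the inverse Fourier transform of a smooth compactly supported function, hence a Schwartz function
decaying like `(1 + |xᵢ|)^{-N}`. Since every `aᵢ ≥ 1`, the bracket satisfies
`1 ≤ ⟨x⟩ ≤ |(1, x)| ≤ ∏ᵢ (1 + |xᵢ|)`, and `N ≥ r` gives the bound.
-/

open MeasureTheory

/-- Pointwise inverse Fourier transform, for the normalization
`(𝓕 f)(ξ) = (2π)^{-1/2} ∫ f(x) e^{-ixξ} dx`. -/
noncomputable def invFourier (g : ℝ → ℂ) (x : ℝ) : ℂ :=
  ((Real.sqrt (2 * Real.pi))⁻¹ : ℂ) * ∫ ξ : ℝ, g ξ * Complex.exp (Complex.I * x * ξ)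

/-- Frequency side of the central bell function:
`ĝ_I(ξ) = ρ(|I|ξ/ε) ρ(|I|(1 − ξ)/ε')`. -/
noncomputable def centralBellHat (ρ : ℝ → ℝ) (α α' ε ε' : ℝ) (ξ : ℝ) : ℝ :=
  ρ ((α' - α) * ξ / ε) * ρ ((α' - α) * (1 - ξ) / ε')

/-- The central bell function `g_I = 𝓕⁻¹ ĝ_I` (continuous representative). -/
noncomputable def centralBell (ρ : ℝ → ℝ) (α α' ε ε' : ℝ) (x : ℝ) : ℂ :=
  invFourier (fun ξ => (centralBellHat ρ α α' ε ε' ξ : ℂ)) x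

/-- Left endpoint of the interval `I^i_{j,k}` of the anisotropic Lizorkin partition:
for `|k| = 1` the interval is `±[0, 2^{(j−1)aᵢ})`; for `|k| = 2` it is
`±[2^{(j−1)aᵢ}, 2^{j aᵢ})`. -/
noncomputable def lizL (ai : ℝ) (j : ℤ) (k : ℤ) : ℝ :=
  if k = 1 then 0
  else if k = -1 then -((2 : ℝ) ^ (((j : ℝ) - 1) * ai))
  else if k = 2 then (2 : ℝ) ^ (((j : ℝ) - 1) * ai)
  else -((2 : ℝ) ^ ((j : ℝ) * ai))

/-- Right endpoint of the interval `I^i_{j,k}`. -/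
noncomputable def lizR (ai : ℝ) (j : ℤ) (k : ℤ) : ℝ :=
  if k = 1 then (2 : ℝ) ^ (((j : ℝ) - 1) * ai)
  else if k = -1 then 0
  else if k = 2 then (2 : ℝ) ^ ((j : ℝ) * ai)
  else -((2 : ℝ) ^ (((j : ℝ) - 1) * ai))

/-- Cutoff radius at the left endpoint of `I^i_{j,k}`: `2^{(j−2)aᵢ}` at `±2^{j aᵢ}` and
`2^{(j−3)aᵢ}` at `0` and `±2^{(j−1)aᵢ}`. -/
noncomputable def lizEpsL (ai : ℝ) (j : ℤ) (k : ℤ) : ℝ :=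
  if k = -2 then (2 : ℝ) ^ (((j : ℝ) - 2) * ai) else (2 : ℝ) ^ (((j : ℝ) - 3) * ai)

/-- Cutoff radius at the right endpoint of `I^i_{j,k}`. -/
noncomputable def lizEpsR (ai : ℝ) (j : ℤ) (k : ℤ) : ℝ :=
  if k = 2 then (2 : ℝ) ^ (((j : ℝ) - 2) * ai) else (2 : ℝ) ^ (((j : ℝ) - 3) * ai)

/-- The tensor-product central bell function
`G_{R_{j,k}}(x) = ∏ᵢ g_{I^i_{j,kᵢ}}(xᵢ)` of a Lizorkin rectangle. -/
noncomputable def mCentralBell (d : ℕ) (ρ : ℝ → ℝ) (a : Fin d → ℝ) (j : ℤ)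
    (k : Fin d → ℤ) (x : EuclideanSpace ℝ (Fin d)) : ℂ :=
  ∏ i, centralBell ρ (lizL (a i) j (k i)) (lizR (a i) j (k i))
    (lizEpsL (a i) j (k i)) (lizEpsR (a i) j (k i)) (x i)

/-- The index set `E = E₂^d ∖ E₁^d` with `E₂ = {±1, ±2}`, `E₁ = {±1}`. -/
def idxE (d : ℕ) : Set (Fin d → ℤ) :=
  {k | (∀ i, k i = 1 ∨ k i = -1 ∨ k i = 2 ∨ k i = -2) ∧ ¬ (∀ i, k i = 1 ∨ k i = -1)}

open FourierTransform Real
open scoped ContDiff SchwartzMap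

theorem SchwartzMap.exists_one_add_norm_pow_mul_norm_le {E F : Type*} [NormedAddCommGroup E]
    [NormedSpace ℝ E] [NormedAddCommGroup F] [NormedSpace ℝ F] (f : 𝓢(E, F)) (N : ℕ) :
    ∃ C, ∀ x, (1 + ‖x‖) ^ N * ‖f x‖ ≤ C :=
  ⟨_, fun x => by
    simpa [norm_iteratedFDeriv_zero] using
      f.one_add_le_sup_seminorm_apply (𝕜 := ℝ) (m := (N, 0)) le_rfl le_rfl x⟩

theorem invFourier_eq_fourierInv (g : ℝ → ℂ) (x : ℝ) :
    invFourier g x = ((√(2 * π))⁻¹ : ℂ) * 𝓕⁻ g (x / (2 * π)) := by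
  rw [invFourier, Real.fourierInv_eq']
  congr 1
  refine integral_congr_ae (Filter.Eventually.of_forall fun ξ => ?_)
  simp only [smul_eq_mul, RCLike.inner_apply, conj_trivial]
  rw [mul_comm]
  congr 2
  push_cast
  field_simp

theorem exists_one_add_abs_pow_mul_norm_invFourier_le {g : ℝ → ℂ} (hg : ContDiff ℝ ∞ g)
    (hsupp : HasCompactSupport g) (N : ℕ) :
    ∃ C, ∀ x, (1 + |x|) ^ N * ‖invFourier g x‖ ≤ C := by
  obtain ⟨C, hC⟩ := (𝓕⁻ (hsupp.toSchwartzMap hg)).exists_one_add_norm_pow_mul_norm_le N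
  refine ⟨(2 * π) ^ N * C * (√(2 * π))⁻¹, fun x => ?_⟩
  have hw := hC (x / (2 * π))
  rw [SchwartzMap.fourierInv_coe, show ⇑(hsupp.toSchwartzMap hg) = g from rfl] at hw
  have hx : 1 + |x| ≤ 2 * π * (1 + ‖x / (2 * π)‖) := by
    rw [norm_div, Real.norm_eq_abs, Real.norm_of_nonneg (by positivity)]
    field_simp
    nlinarith [Real.pi_gt_three, abs_nonneg x]
  rw [invFourier_eq_fourierInv, norm_mul, norm_inv, Complex.norm_real,
    Real.norm_of_nonneg (Real.sqrt_nonneg _)]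
  calc (1 + |x|) ^ N * ((√(2 * π))⁻¹ * ‖𝓕⁻ g (x / (2 * π))‖)
      ≤ (2 * π * (1 + ‖x / (2 * π)‖)) ^ N * ((√(2 * π))⁻¹ * ‖𝓕⁻ g (x / (2 * π))‖) := by
        gcongr
    _ = (2 * π) ^ N * ((1 + ‖x / (2 * π)‖) ^ N * ‖𝓕⁻ g (x / (2 * π))‖) * (√(2 * π))⁻¹ := by
        rw [mul_pow]; ring
    _ ≤ (2 * π) ^ N * C * (√(2 * π))⁻¹ := by gcongr

theorem centralBellHat_mul_left (ρ : ℝ → ℝ) {s : ℝ} (hs : s ≠ 0) (α α' ε ε' : ℝ) :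
    centralBellHat ρ (s * α) (s * α') (s * ε) (s * ε') = centralBellHat ρ α α' ε ε' := by
  ext ξ
  simp only [centralBellHat, ← mul_sub, mul_assoc s, mul_div_mul_left _ _ hs]

theorem centralBell_mul_left (ρ : ℝ → ℝ) {s : ℝ} (hs : s ≠ 0) (α α' ε ε' : ℝ) :
    centralBell ρ (s * α) (s * α') (s * ε) (s * ε') = centralBell ρ α α' ε ε' := by
  ext x
  rw [centralBell, centralBell, centralBellHat_mul_left ρ hs]

theorem contDiff_centralBellHat {ρ : ℝ → ℝ} (hρ : ContDiff ℝ ∞ ρ) (α α' ε ε' : ℝ) :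
    ContDiff ℝ ∞ (centralBellHat ρ α α' ε ε') :=
  (hρ.comp (by fun_prop)).mul (hρ.comp (by fun_prop))

theorem hasCompactSupport_centralBellHat {ρ : ℝ → ℝ} (hρneg : ∀ ξ, ξ ≤ -1 → ρ ξ = 0) {α α' ε ε' : ℝ}
    (hα : α < α') (hε : 0 < ε) (hε' : 0 < ε') :
    HasCompactSupport (centralBellHat ρ α α' ε ε') := by
  refine HasCompactSupport.intro (isCompact_Icc (a := -(ε / (α' - α)))
    (b := 1 + ε' / (α' - α))) fun ξ hξ => ?_
  have hl : 0 < α' - α := sub_pos.2 hα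
  rcases not_and_or.1 hξ with hξ | hξ
  · have : (α' - α) * ξ / ε ≤ -1 := by
      rw [div_le_iff₀ hε]
      have := (div_lt_iff₀ hl).1 (lt_neg.1 (not_le.1 hξ))
      linarith
    rw [centralBellHat, hρneg _ this, zero_mul]
  · have : (α' - α) * (1 - ξ) / ε' ≤ -1 := by
      rw [div_le_iff₀ hε']
      have := (div_lt_iff₀' hl).1 (lt_sub_iff_add_lt'.2 (not_le.1 hξ))
      linarith
    rw [centralBellHat, hρneg _ this, mul_zero]

theorem exists_one_add_abs_pow_mul_norm_centralBell_le {ρ : ℝ → ℝ} (hρ : ContDiff ℝ ∞ ρ)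
    (hρneg : ∀ ξ, ξ ≤ -1 → ρ ξ = 0) {α α' ε ε' : ℝ} (hα : α < α') (hε : 0 < ε)
    (hε' : 0 < ε') (N : ℕ) : ∃ C, ∀ x, (1 + |x|) ^ N * ‖centralBell ρ α α' ε ε' x‖ ≤ C :=
  exists_one_add_abs_pow_mul_norm_invFourier_le
    (Complex.ofRealCLM.contDiff.comp (contDiff_centralBellHat hρ α α' ε ε'))
    ((hasCompactSupport_centralBellHat hρneg hα hε hε').comp_left Complex.ofReal_zero) N

theorem two_rpow_sub_mul (j c ai : ℝ) :
    (2 : ℝ) ^ ((j - c) * ai) = 2 ^ (j * ai) * 2 ^ (-c * ai) := by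
  rw [← Real.rpow_add two_pos]
  ring_nf

theorem lizL_eq_mul (ai : ℝ) (j k : ℤ) : lizL ai j k = 2 ^ ((j : ℝ) * ai) * lizL ai 0 k := by
  unfold lizL
  split_ifs <;> simp [two_rpow_sub_mul _ 1]

theorem lizR_eq_mul (ai : ℝ) (j k : ℤ) : lizR ai j k = 2 ^ ((j : ℝ) * ai) * lizR ai 0 k := by
  unfold lizR
  split_ifs <;> simp [two_rpow_sub_mul _ 1]

theorem lizEpsL_eq_mul (ai : ℝ) (j k : ℤ) :
    lizEpsL ai j k = 2 ^ ((j : ℝ) * ai) * lizEpsL ai 0 k := by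
  unfold lizEpsL
  split_ifs <;> simp [two_rpow_sub_mul _ 2, two_rpow_sub_mul _ 3]

theorem lizEpsR_eq_mul (ai : ℝ) (j k : ℤ) :
    lizEpsR ai j k = 2 ^ ((j : ℝ) * ai) * lizEpsR ai 0 k := by
  unfold lizEpsR
  split_ifs <;> simp [two_rpow_sub_mul _ 2, two_rpow_sub_mul _ 3]

theorem lizL_lt_lizR {ai : ℝ} (hai : 0 < ai) (j k : ℤ) : lizL ai j k < lizR ai j k := by
  have hlt : (2 : ℝ) ^ (((j : ℝ) - 1) * ai) < 2 ^ ((j : ℝ) * ai) :=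
    Real.rpow_lt_rpow_of_exponent_lt one_lt_two (by nlinarith)
  unfold lizL lizR
  split_ifs <;> linarith [Real.rpow_pos_of_pos two_pos (((j : ℝ) - 1) * ai)]

theorem lizEpsL_pos (ai : ℝ) (j k : ℤ) : 0 < lizEpsL ai j k := by
  unfold lizEpsL; split_ifs <;> positivity

theorem lizEpsR_pos (ai : ℝ) (j k : ℤ) : 0 < lizEpsR ai j k := by
  unfold lizEpsR; split_ifs <;> positivity

/-- `g_{I^i_{j,k}}`, the `i`-th factor of `mCentralBell`. -/
noncomputable def lizBell (ρ : ℝ → ℝ) (ai : ℝ) (j k : ℤ) : ℝ → ℂ :=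
  centralBell ρ (lizL ai j k) (lizR ai j k) (lizEpsL ai j k) (lizEpsR ai j k)

theorem mCentralBell_eq_prod_lizBell (d : ℕ) (ρ : ℝ → ℝ) (a : Fin d → ℝ) (j : ℤ)
    (k : Fin d → ℤ) (x : EuclideanSpace ℝ (Fin d)) :
    mCentralBell d ρ a j k x = ∏ i, lizBell ρ (a i) j (k i) (x i) :=
  rfl

theorem lizBell_eq_lizBell_zero (ρ : ℝ → ℝ) (ai : ℝ) (j k : ℤ) :
    lizBell ρ ai j k = lizBell ρ ai 0 k := by
  rw [lizBell, lizL_eq_mul, lizR_eq_mul, lizEpsL_eq_mul, lizEpsR_eq_mul,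
    centralBell_mul_left ρ (by positivity), lizBell]

theorem exists_one_add_abs_pow_mul_norm_lizBell_le {ρ : ℝ → ℝ} (hρ : ContDiff ℝ ∞ ρ)
    (hρneg : ∀ ξ, ξ ≤ -1 → ρ ξ = 0) {ai : ℝ} (hai : 0 < ai) (N : ℕ) :
    ∃ C, ∀ (j : ℤ), ∀ k ∈ ({1, -1, 2, -2} : Set ℤ), ∀ y,
      (1 + |y|) ^ N * ‖lizBell ρ ai j k y‖ ≤ C := by
  choose C hC using fun k => exists_one_add_abs_pow_mul_norm_centralBell_le hρ hρneg
    (lizL_lt_lizR hai 0 k) (lizEpsL_pos ai 0 k) (lizEpsR_pos ai 0 k) N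
  obtain ⟨M, hM⟩ := (Set.toFinite {1, -1, 2, -2}).image C |>.bddAbove
  refine ⟨M, fun j k hk y => ?_⟩
  rw [lizBell_eq_lizBell_zero]
  exact (hC k y).trans (hM (Set.mem_image_of_mem C hk))

theorem Finset.one_add_sum_le_prod_one_add {ι R : Type*} [CommSemiring R] [PartialOrder R]
    [IsOrderedRing R] (s : Finset ι) {f : ι → R} (hf : ∀ i ∈ s, 0 ≤ f i) :
    1 + ∑ i ∈ s, f i ≤ ∏ i ∈ s, (1 + f i) := by
  classical
  induction s using Finset.induction_on with
  | empty => simp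
  | insert a s ha ih =>
    have hfa : 0 ≤ f a := hf a (mem_insert_self a s)
    have hs : ∀ i ∈ s, 0 ≤ f i := fun i hi => hf i (mem_insert_of_mem hi)
    rw [sum_insert ha, prod_insert ha]
    calc 1 + (f a + ∑ i ∈ s, f i)
        ≤ 1 + (f a + ∑ i ∈ s, f i) + f a * ∑ i ∈ s, f i :=
          le_add_of_nonneg_right (mul_nonneg hfa (sum_nonneg hs))
      _ = (1 + f a) * (1 + ∑ i ∈ s, f i) := by ring
      _ ≤ (1 + f a) * ∏ i ∈ s, (1 + f i) :=
          mul_le_mul_of_nonneg_left (ih hs) (add_nonneg zero_le_one hfa)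

theorem EuclideanSpace.norm_le_sum_abs {ι : Type*} [Fintype ι] (y : EuclideanSpace ℝ ι) :
    ‖y‖ ≤ ∑ i, |y i| := by
  rw [EuclideanSpace.norm_eq, Real.sqrt_le_left (Finset.sum_nonneg fun i _ => abs_nonneg _)]
  simpa [sq_abs] using Finset.sum_sq_le_sq_sum_of_nonneg (s := Finset.univ)
    (f := fun i => |y i|) fun i _ => abs_nonneg _

theorem norm_finCons_one_le_prod {d : ℕ} (x : Fin d → ℝ) :
    ‖(WithLp.equiv 2 ((i : Fin (d + 1)) → ℝ)).symm (Fin.cons (α := fun _ => ℝ) 1 x)‖ ≤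
      ∏ i, (1 + |x i|) := by
  refine (EuclideanSpace.norm_le_sum_abs _).trans ?_
  simpa [Fin.sum_univ_succ] using Finset.univ.one_add_sum_le_prod_one_add
    (f := fun i => |x i|) fun i _ => abs_nonneg _

theorem one_le_of_norm_rpow_neg_mul_eq_one {ι : Type*} [Fintype ι] {t : ℝ} {b : ι → ℝ}
    {y : ι → ℝ} {i : ι} (ht : 0 < t) (hb : 0 < b i) (hy : y i = 1)
    (h : ‖(WithLp.equiv 2 (ι → ℝ)).symm (fun i => t ^ (-b i) * y i)‖ = 1) : 1 ≤ t := by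
  have hle := h ▸ PiLp.norm_apply_le ((WithLp.equiv 2 (ι → ℝ)).symm fun i => t ^ (-b i) * y i) i
  simp only [WithLp.equiv_symm_apply, PiLp.toLp_apply, hy, mul_one, Real.norm_eq_abs,
    abs_of_pos (Real.rpow_pos_of_pos ht _)] at hle
  rcases (Real.rpow_le_one_iff_of_pos ht).1 hle with h1 | ⟨_, h2⟩
  · exact h1.1
  · linarith

theorem le_norm_of_norm_rpow_neg_mul_eq_one {ι : Type*} [Fintype ι] {t : ℝ} {b : ι → ℝ}
    {y : ι → ℝ} (ht : 1 ≤ t) (hb : ∀ i, 1 ≤ b i)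
    (h : ‖(WithLp.equiv 2 (ι → ℝ)).symm (fun i => t ^ (-b i) * y i)‖ = 1) :
    t ≤ ‖(WithLp.equiv 2 (ι → ℝ)).symm y‖ := by
  have ht0 : 0 < t := one_pos.trans_le ht
  have hcoord : ∀ i, |t ^ (-b i) * y i| ≤ |t⁻¹ * y i| := fun i => by
    rw [abs_mul, abs_mul, abs_of_pos (Real.rpow_pos_of_pos ht0 _),
      abs_of_pos (inv_pos.2 ht0), ← Real.rpow_neg_one]
    gcongr
    linarith [hb i]
  have hle : 1 ≤ ‖(WithLp.equiv 2 (ι → ℝ)).symm (t⁻¹ • y)‖ := by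
    rw [← h]
    simp only [EuclideanSpace.norm_eq, WithLp.equiv_symm_apply, Real.norm_eq_abs, sq_abs,
      Pi.smul_apply, smul_eq_mul]
    exact Real.sqrt_le_sqrt (Finset.sum_le_sum fun i _ => sq_le_sq.2 (hcoord i))
  rw [WithLp.equiv_symm_apply, WithLp.toLp_smul, norm_smul, Real.norm_of_nonneg (inv_pos.2 ht0).le,
    inv_mul_eq_div, one_le_div ht0] at hle
  exact hle

theorem le_mul_rpow_neg_of_mul_pow_le {u C t P r : ℝ} {N : ℕ} (hu : 0 ≤ u) (ht : 1 ≤ t)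
    (htP : t ≤ P) (hrN : r ≤ N) (h : u * P ^ N ≤ C) : u ≤ C * t ^ (-r) := by
  have ht0 : 0 < t := one_pos.trans_le ht
  have htr : t ^ r ≤ P ^ N := calc
    t ^ r ≤ t ^ (N : ℝ) := Real.rpow_le_rpow_of_exponent_le ht hrN
    _ = t ^ N := Real.rpow_natCast t N
    _ ≤ P ^ N := pow_le_pow_left₀ ht0.le htP N
  rw [Real.rpow_neg ht0.le, ← div_eq_mul_inv, le_div_iff₀ (Real.rpow_pos_of_pos ht0 r)]
  exact (mul_le_mul_of_nonneg_left htr hu).trans h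

theorem stmt19_general (d : ℕ) (a : Fin d → ℝ) (ha : ∀ i, 1 ≤ a i)
    (ρ : ℝ → ℝ) (hρsmooth : ∀ m : ℕ, ContDiff ℝ m ρ)
    (hρneg : ∀ ξ, ξ ≤ -1 → ρ ξ = 0)
    (nb : EuclideanSpace ℝ (Fin (d + 1)) → ℝ)
    (hnb : ∀ y : EuclideanSpace ℝ (Fin (d + 1)), y ≠ 0 → 0 < nb y ∧
      ‖(WithLp.equiv 2 ((i : Fin (d + 1)) → ℝ)).symm
        (fun i => (nb y) ^ (-(Fin.cons (α := fun _ => ℝ) 1 a i)) * y i)‖ = 1)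
    (r : ℝ) :
    ∃ C : ℝ, ∀ (j : ℤ) (k : Fin d → ℤ), k ∈ idxE d → ∀ x : EuclideanSpace ℝ (Fin d),
      ‖mCentralBell d ρ a j k x‖ ≤
        C * nb ((WithLp.equiv 2 ((i : Fin (d + 1)) → ℝ)).symm
          (Fin.cons (α := fun _ => ℝ) 1 (fun i => x i))) ^ (-r) := by
  obtain ⟨N, hrN⟩ := exists_nat_ge r
  choose C hC using fun i => exists_one_add_abs_pow_mul_norm_lizBell_le
    (contDiff_infty.2 hρsmooth) hρneg (one_pos.trans_le (ha i)) N
  refine ⟨∏ i, C i, fun j k hk x => ?_⟩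
  set y : EuclideanSpace ℝ (Fin (d + 1)) :=
    (WithLp.equiv 2 _).symm (Fin.cons (α := fun _ => ℝ) 1 fun i => x i)
  have hy : y ≠ 0 := fun h => one_ne_zero (congrArg (· 0) h)
  obtain ⟨ht0, hnorm⟩ := hnb y hy
  have hexp : ∀ i, 1 ≤ Fin.cons (α := fun _ => ℝ) 1 a i := Fin.cases le_rfl ha
  have ht1 : 1 ≤ nb y :=
    one_le_of_norm_rpow_neg_mul_eq_one (i := 0) ht0 one_pos rfl hnorm
  have htP : nb y ≤ ∏ i, (1 + |x i|) :=
    (le_norm_of_norm_rpow_neg_mul_eq_one ht1 hexp hnorm).trans (norm_finCons_one_le_prod _)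
  refine le_mul_rpow_neg_of_mul_pow_le (norm_nonneg _) ht1 htP hrN ?_
  rw [mCentralBell_eq_prod_lizBell, norm_prod, ← Finset.prod_pow, ← Finset.prod_mul_distrib]
  exact Finset.prod_le_prod (fun i _ => by positivity) fun i _ => by
    rw [mul_comm]
    exact hC i j (k i) (hk.1 i) (x i)

/-- For every `r > 0` there is `C_r < ∞`, independent of `j ∈ ℤ` and
`k ∈ E`, such that `|G_{R_{j,k}}(x)| ≤ C_r ⟨x⟩^{-r}` for all `x ∈ ℝ^d`, where `⟨·⟩` is
the anisotropic bracket `⟨x⟩ = |(1,x)|_{(1,a)}` and `nb` is the anisotropic quasi-norm on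
`ℝ^{1+d}` for the anisotropy `(1, a₁, …, a_d)`. -/
theorem stmt19 (d : ℕ) (hd : 0 < d) (a : Fin d → ℝ) (ha : ∀ i, 1 ≤ a i)
    (ρ : ℝ → ℝ) (hρsmooth : ∀ m : ℕ, ContDiff ℝ m ρ)
    (hρ0 : ∀ ξ, 0 ≤ ρ ξ) (hρ1 : ∀ ξ, ρ ξ ≤ 1)
    (hρneg : ∀ ξ, ξ ≤ -1 → ρ ξ = 0) (hρpos : ∀ ξ, 1 ≤ ξ → ρ ξ = 1)
    (hρsq : ∀ ξ, ρ ξ ^ 2 + ρ (-ξ) ^ 2 = 1)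
    (nb : EuclideanSpace ℝ (Fin (d + 1)) → ℝ)
    (hnb0 : nb 0 = 0)
    (hnb : ∀ y : EuclideanSpace ℝ (Fin (d + 1)), y ≠ 0 → 0 < nb y ∧
      ‖(WithLp.equiv 2 ((i : Fin (d + 1)) → ℝ)).symm
        (fun i => (nb y) ^ (-(Fin.cons (α := fun _ => ℝ) 1 a i)) * y i)‖ = 1)
    (r : ℝ) (hr : 0 < r) :
    ∃ C : ℝ, ∀ (j : ℤ) (k : Fin d → ℤ), k ∈ idxE d → ∀ x : EuclideanSpace ℝ (Fin d),
      ‖mCentralBell d ρ a j k x‖ ≤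
        C * nb ((WithLp.equiv 2 ((i : Fin (d + 1)) → ℝ)).symm
          (Fin.cons (α := fun _ => ℝ) 1 (fun i => x i))) ^ (-r) :=
  stmt19_general d a ha ρ hρsmooth hρneg nb hnb r
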